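/- arXiv:1209.3813 — 4 statements merged into one kernel-verified Lean document; each statement's English description precedes it below -/
import Mathlib

section
/- Fix K ∈ ℝ, real N > 1 and R > 0 with K·R² < (N−1)·π². Then the function r ↦ φ_{K,N}(r,R) is differentiable on (0,R) with derivative (d/dr) φ_{K,N}(r,R) = −∫_r^R (s_{K,N}(η)/s_{K,N}(r))^{N−1} dη, and this derivative is ≤ 0. -/
open Real intervalIntegral

/-- The comparison function `s_{K,N}`. -/
noncomputable def sKN (K N θ : ℝ) : ℝ :=
  if 0 < K then Real.sqrt ((N - 1) / K) * Real.sin (θ * Real.sqrt (K / (N - 1)))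
  else if K = 0 then θ
  else Real.sqrt ((N - 1) / (-K)) * Real.sinh (θ * Real.sqrt (-K / (N - 1)))

/-- `φ_{K,N}(r,R) = ∫∫_{r ≤ ξ ≤ η ≤ R} (s_{K,N}(η)/s_{K,N}(ξ))^{N−1} dη dξ`. -/
noncomputable def phiKN (K N r R : ℝ) : ℝ :=
  ∫ ξ in r..R, ∫ η in ξ..R, (sKN K N η / sKN K N ξ) ^ (N - 1)

lemma sKN_continuous (K N : ℝ) : Continuous (sKN K N) := by
  unfold sKN
  rcases lt_trichotomy K 0 with h | h | h
  · simp only [if_neg (not_lt.mpr h.le), if_neg h.ne]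
    continuity
  · simp only [h, if_neg (lt_irrefl (0:ℝ)), if_pos rfl]
    continuity
  · simp only [if_pos h]
    continuity

lemma sKN_pos (K N R : ℝ) (hN : 1 < N) (hR : 0 < R)
    (hKR : K * R ^ 2 < (N - 1) * Real.pi ^ 2) {θ : ℝ} (hθ : θ ∈ Set.Ioc 0 R) :
    0 < sKN K N θ := by
  have hN1 : (0:ℝ) < N - 1 := by linarith
  obtain ⟨hθ0, hθR⟩ := hθ
  unfold sKN
  rcases lt_trichotomy K 0 with h | h | h
  · simp only [if_neg (not_lt.mpr h.le), if_neg h.ne]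
    apply mul_pos
    · exact Real.sqrt_pos.mpr (div_pos hN1 (by linarith))
    · exact Real.sinh_pos_iff.mpr
        (mul_pos hθ0 (Real.sqrt_pos.mpr (div_pos (by linarith) hN1)))
  · simp only [h, if_neg (lt_irrefl (0:ℝ)), if_pos rfl]
    exact hθ0
  · simp only [if_pos h]
    have hKN : (0:ℝ) < K / (N - 1) := div_pos h hN1
    apply mul_pos
    · exact Real.sqrt_pos.mpr (div_pos hN1 h)
    · apply Real.sin_pos_of_pos_of_lt_pi
      · exact mul_pos hθ0 (Real.sqrt_pos.mpr hKN)
      · have h1 : θ * Real.sqrt (K / (N - 1)) ≤ R * Real.sqrt (K / (N - 1)) := by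
          apply mul_le_mul_of_nonneg_right hθR (Real.sqrt_nonneg _)
        have h2 : (R * Real.sqrt (K / (N - 1))) ^ 2 < Real.pi ^ 2 := by
          rw [mul_pow, Real.sq_sqrt hKN.le]
          rw [mul_comm (R^2), div_mul_eq_mul_div, div_lt_iff₀ hN1]
          nlinarith
        have h3 : R * Real.sqrt (K / (N - 1)) < Real.pi :=
          lt_of_pow_lt_pow_left₀ 2 Real.pi_pos.le h2
        linarith

/-- `r ↦ φ_{K,N}(r,R)` is differentiable on `(0,R)` with derivative
`−∫_r^R (s_{K,N}(η)/s_{K,N}(r))^{N−1} dη ≤ 0`. -/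
theorem phiKN_hasDerivAt (K N R : ℝ) (hN : 1 < N) (hR : 0 < R)
    (hKR : K * R ^ 2 < (N - 1) * Real.pi ^ 2) :
    ∀ r ∈ Set.Ioo (0 : ℝ) R,
      HasDerivAt (fun r => phiKN K N r R)
        (-(∫ η in r..R, (sKN K N η / sKN K N r) ^ (N - 1))) r ∧
      -(∫ η in r..R, (sKN K N η / sKN K N r) ^ (N - 1)) ≤ 0 := by
  intro r hr
  obtain ⟨hr0, hrR⟩ := hr
  have hN1 : (0:ℝ) < N - 1 := by linarith
  set g : ℝ → ℝ := sKN K N with hg_def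
  have hg : Continuous g := sKN_continuous K N
  have hgpos : ∀ θ ∈ Set.Ioc (0:ℝ) R, 0 < g θ := fun θ hθ => sKN_pos K N R hN hR hKR hθ
  have hf : Continuous fun η => g η ^ (N - 1) :=
    hg.rpow_const fun x => Or.inr hN1.le
  set h : ℝ → ℝ := fun ξ => ∫ η in ξ..R, g η ^ (N - 1) with hh_def
  have hh : Continuous h := by
    rw [continuous_iff_continuousAt]
    intro x
    exact (intervalIntegral.integral_hasDerivAt_left (hf.intervalIntegrable _ _)
      (hf.stronglyMeasurableAtFilter _ _) hf.continuousAt).continuousAt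
  set F : ℝ → ℝ := fun ξ => ∫ η in ξ..R, (g η / g ξ) ^ (N - 1) with hF_def
  have hFeq : ∀ ξ ∈ Set.Ioc (0:ℝ) R, F ξ = h ξ / g ξ ^ (N - 1) := by
    intro ξ hξ
    rw [hh_def]
    simp only
    rw [← intervalIntegral.integral_div]
    apply intervalIntegral.integral_congr
    intro η hη
    show (g η / g ξ) ^ (N - 1) = g η ^ (N - 1) / g ξ ^ (N - 1)
    have hsub : Set.uIcc ξ R ⊆ Set.Ioc 0 R := by
      rw [Set.uIcc_of_le hξ.2]
      exact fun x hx => ⟨lt_of_lt_of_le hξ.1 hx.1, hx.2⟩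
    have hη' : η ∈ Set.Ioc (0:ℝ) R := hsub hη
    rw [Real.div_rpow (hgpos η hη').le (hgpos ξ hξ).le]
  have hGcont : ContinuousOn (fun ξ => h ξ / g ξ ^ (N - 1)) (Set.Ioc 0 R) :=
    hh.continuousOn.div hf.continuousOn fun ξ hξ =>
      (Real.rpow_pos_of_pos (hgpos ξ hξ) _).ne'
  have hFcont : ContinuousOn F (Set.Ioc 0 R) := hGcont.congr hFeq
  have hFcontOo : ContinuousOn F (Set.Ioo 0 R) :=
    hFcont.mono Set.Ioo_subset_Ioc_self
  have hmemOo : r ∈ Set.Ioo (0:ℝ) R := ⟨hr0, hrR⟩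
  have hFr : ContinuousAt F r :=
    hFcont.continuousAt (Filter.mem_of_superset (isOpen_Ioo.mem_nhds hmemOo)
      Set.Ioo_subset_Ioc_self)
  have hmeas : StronglyMeasurableAtFilter F (nhds r) MeasureTheory.volume :=
    ContinuousOn.stronglyMeasurableAtFilter isOpen_Ioo hFcontOo r hmemOo
  have hFint : IntervalIntegrable F MeasureTheory.volume r R := by
    apply ContinuousOn.intervalIntegrable
    apply hFcont.mono
    rw [Set.uIcc_of_le hrR.le]
    exact fun x hx => ⟨lt_of_lt_of_le hr0 hx.1, hx.2⟩
  have hd := intervalIntegral.integral_hasDerivAt_left hFint hmeas hFr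
  constructor
  · exact hd
  · rw [neg_nonpos]
    apply intervalIntegral.integral_nonneg hrR.le
    intro η hη
    have hη' : η ∈ Set.Ioc (0:ℝ) R := ⟨lt_of_lt_of_le hr0 hη.1, hη.2⟩
    exact Real.rpow_nonneg
      (div_nonneg (hgpos η hη').le (hgpos r ⟨hr0, hrR.le⟩).le) _
end

section
/- Let N > 2, D > 0 and h > 0, and define Φ : (0,h] → ℝ by Φ(θ) = 2θ + D·(θ² − (N/(N−2))·h² + (2/(N−2))·h^N·θ^{2−N}). Then Φ is convex on (0,h], Φ'(θ) → −∞ as θ ↓ 0 and Φ'(h) = 2 > 0; there exists a unique θ₀ ∈ (0,h) satisfying θ₀^{N−1} = D·(h^N − θ₀^N); Φ attains its minimum over (0,h] at θ₀; and the minimum value satisfies Φ(θ₀) ≤ 2·((N−1)/(N−2))·(D·h^N)^{1/(N−1)}. -/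
/-!
Writing `g θ = θ^{N-1} + D θ^N`, one has `Φ'(θ) = 2 θ^{1-N} (g θ - D h^N)` for `θ > 0`. Since `Φ'`
is increasing, `Φ` is convex, and a critical point of a convex function is a global minimum; the
critical points are the solutions of `g θ = D h^N`, of which there is exactly one in `(0, h)`
because `g` increases strictly from `g 0 = 0` to `g h > D h^N`.

At the critical point `θ₀`, multiplying the critical equation by `θ₀^{2-N}` removes the singular
term: `(N - 2) Φ(θ₀) = 2 (N - 1) θ₀ - N D (h² - θ₀²) ≤ 2 (N - 1) θ₀`, and `θ₀^{N-1} ≤ D h^N`.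
-/

open Real Filter Set Topology

namespace PhiMin

variable {N D h θ : ℝ}

noncomputable def phi (N D h θ : ℝ) : ℝ :=
  2 * θ + D * (θ ^ 2 - (N / (N - 2)) * h ^ 2 + (2 / (N - 2)) * h ^ N * θ ^ (2 - N))

noncomputable def phiDeriv (N D h θ : ℝ) : ℝ :=
  2 + 2 * D * θ - 2 * D * h ^ N * θ ^ (1 - N)

theorem hasDerivAt_phi (hN : N ≠ 2) (hθ : 0 < θ) :
    HasDerivAt (phi N D h) (phiDeriv N D h θ) θ := by
  have hpow : HasDerivAt (fun x : ℝ => x ^ (2 - N)) ((2 - N) * θ ^ (1 - N)) θ := by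
    have := hasDerivAt_rpow_const (p := 2 - N) (Or.inl hθ.ne')
    rwa [show 2 - N - 1 = 1 - N by ring] at this
  have hsum : HasDerivAt (phi N D h)
      (2 * 1 + D * (2 * θ ^ 1 + (2 / (N - 2)) * h ^ N * ((2 - N) * θ ^ (1 - N)))) θ :=
    ((hasDerivAt_id θ).const_mul 2).add
      ((((hasDerivAt_pow 2 θ).sub_const _).add (hpow.const_mul _)).const_mul D)
  convert hsum using 1
  have : N - 2 ≠ 0 := sub_ne_zero.mpr hN
  unfold phiDeriv
  field_simp
  ring

theorem monotoneOn_phiDeriv (hN : 1 ≤ N) (hD : 0 ≤ D) (hh : 0 ≤ h) :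
    MonotoneOn (phiDeriv N D h) (Ioi 0) := by
  intro x hx y _ hxy
  have hpow : y ^ (1 - N) ≤ x ^ (1 - N) := rpow_le_rpow_of_nonpos hx hxy (by linarith)
  have hc : 0 ≤ 2 * D * h ^ N := by positivity
  unfold phiDeriv
  nlinarith [mul_le_mul_of_nonneg_left hpow hc, mul_le_mul_of_nonneg_left hxy hD]

theorem convexOn_phi (hN : 2 < N) (hD : 0 ≤ D) (hh : 0 ≤ h) :
    ConvexOn ℝ (Ioi 0) (phi N D h) := by
  have hderiv : ∀ θ ∈ Ioi (0 : ℝ), HasDerivAt (phi N D h) (phiDeriv N D h θ) θ :=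
    fun θ hθ => hasDerivAt_phi hN.ne' hθ
  refine MonotoneOn.convexOn_of_deriv (convex_Ioi 0)
    (fun θ hθ => (hderiv θ hθ).continuousAt.continuousWithinAt) ?_ ?_ <;> rw [interior_Ioi]
  · exact fun θ hθ => (hderiv θ hθ).differentiableAt.differentiableWithinAt
  · exact (monotoneOn_phiDeriv (by linarith) hD hh).congr
      fun θ hθ => (hderiv θ hθ).deriv.symm

theorem tendsto_phiDeriv_nhdsGT_zero (hN : 1 < N) (hD : 0 < D) (hh : 0 < h) :
    Tendsto (phiDeriv N D h) (𝓝[>] 0) atBot := by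
  have hsing : Tendsto (fun θ : ℝ => 2 * D * h ^ N * θ ^ (1 - N)) (𝓝[>] 0) atTop :=
    (tendsto_rpow_neg_nhdsGT_zero (by linarith)).const_mul_atTop (by positivity)
  have hlin : Tendsto (fun θ : ℝ => 2 + 2 * D * θ) (𝓝[>] 0) (𝓝 (2 + 2 * D * 0)) :=
    ((continuous_const.add (continuous_const.mul continuous_id)).tendsto 0).mono_left
      nhdsWithin_le_nhds
  exact (hlin.add_atBot (tendsto_neg_atTop_atBot.comp hsing)).congr
    fun θ => (sub_eq_add_neg _ _).symm

theorem phiDeriv_self (hh : 0 < h) : phiDeriv N D h h = 2 := by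
  have : h ^ N * h ^ (1 - N) = h := by
    rw [← rpow_add hh, add_sub_cancel, rpow_one]
  unfold phiDeriv
  linear_combination (-2 * D) * this

theorem phiDeriv_eq_zero_of_rpow_eq (hθ : 0 < θ) (hcrit : θ ^ (N - 1) = D * (h ^ N - θ ^ N)) :
    phiDeriv N D h θ = 0 := by
  have e1 : θ ^ (1 - N) * θ ^ (N - 1) = 1 := by
    rw [← rpow_add hθ, show 1 - N + (N - 1) = 0 by ring, rpow_zero]
  have e2 : θ ^ (1 - N) * θ ^ N = θ := by
    rw [← rpow_add hθ, sub_add_cancel, rpow_one]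
  unfold phiDeriv
  linear_combination (2 * θ ^ (1 - N)) * hcrit - 2 * e1 - 2 * D * e2

theorem strictMonoOn_rpow_add_mul_rpow (hN : 1 < N) (hD : 0 ≤ D) :
    StrictMonoOn (fun θ : ℝ => θ ^ (N - 1) + D * θ ^ N) (Ici 0) :=
  (strictMonoOn_rpow_Ici_of_exponent_pos (by linarith)).add_monotone
    fun _ hx _ _ hxy => mul_le_mul_of_nonneg_left
      (monotoneOn_rpow_Ici_of_exponent_nonneg (by linarith) hx ‹_› hxy) hD

theorem existsUnique_rpow_eq_mul_sub (hN : 1 < N) (hD : 0 < D) (hh : 0 < h) :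
    ∃! θ₀ : ℝ, θ₀ ∈ Ioo 0 h ∧ θ₀ ^ (N - 1) = D * (h ^ N - θ₀ ^ N) := by
  set g := fun θ : ℝ => θ ^ (N - 1) + D * θ ^ N with hg_def
  have hg : StrictMonoOn g (Ici 0) := strictMonoOn_rpow_add_mul_rpow hN hD.le
  have hcrit_iff : ∀ θ, θ ^ (N - 1) = D * (h ^ N - θ ^ N) ↔ g θ = D * h ^ N := fun θ => by
    rw [hg_def]; constructor <;> intro hc <;> linarith
  have hcont : ContinuousOn g (Icc 0 h) := fun θ _ =>
    ((continuousAt_rpow_const θ _ (Or.inr (by linarith))).add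
      ((continuousAt_rpow_const θ _ (Or.inr (by linarith))).const_mul D)).continuousWithinAt
  have hmem : D * h ^ N ∈ Ioo (g 0) (g h) := by
    simp only [hg_def, zero_rpow (by linarith : N - 1 ≠ 0), zero_rpow (by linarith : N ≠ 0),
      mul_zero, add_zero, mem_Ioo]
    exact ⟨by positivity, lt_add_of_pos_left _ (by positivity)⟩
  obtain ⟨θ₀, hθ₀, hgθ₀⟩ := intermediate_value_Ioo hh.le hcont hmem
  refine ⟨θ₀, ⟨hθ₀, (hcrit_iff θ₀).2 hgθ₀⟩, fun θ ⟨hθ, hcrit⟩ => ?_⟩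
  exact hg.injOn hθ.1.le hθ₀.1.le (((hcrit_iff θ).1 hcrit).trans hgθ₀.symm)

theorem isMinOn_phi_of_rpow_eq (hN : 2 < N) (hD : 0 ≤ D) (hθ : θ ∈ Ioo 0 h)
    (hcrit : θ ^ (N - 1) = D * (h ^ N - θ ^ N)) :
    IsMinOn (phi N D h) (Ioc 0 h) θ := by
  have hconv : ConvexOn ℝ (Ioc 0 h) (phi N D h) :=
    (convexOn_phi hN hD (hθ.1.trans hθ.2).le).subset Ioc_subset_Ioi_self (convex_Ioc 0 h)
  refine hconv.isMinOn_of_rightDeriv_eq_zero (by rwa [interior_Ioc]) ?_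
  rw [(hasDerivAt_phi hN.ne' hθ.1).hasDerivWithinAt.derivWithin (uniqueDiffWithinAt_Ioi θ)]
  exact phiDeriv_eq_zero_of_rpow_eq hθ.1 hcrit

theorem phi_eq_of_rpow_eq (hN : N ≠ 2) (hθ : 0 < θ) (hcrit : θ ^ (N - 1) = D * (h ^ N - θ ^ N)) :
    phi N D h θ = 2 * ((N - 1) / (N - 2)) * θ - N * D / (N - 2) * (h ^ 2 - θ ^ 2) := by
  have e1 : θ ^ (2 - N) * θ ^ (N - 1) = θ := by
    rw [← rpow_add hθ, show 2 - N + (N - 1) = 1 by ring, rpow_one]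
  have e2 : θ ^ (2 - N) * θ ^ N = θ ^ 2 := by
    rw [← rpow_add hθ, sub_add_cancel, rpow_two]
  have : N - 2 ≠ 0 := sub_ne_zero.mpr hN
  unfold phi
  field_simp
  linear_combination (-2 * θ ^ (2 - N)) * hcrit + 2 * e1 + 2 * D * e2

theorem phi_le_of_rpow_eq (hN : 2 < N) (hD : 0 ≤ D) (hθ : θ ∈ Ioo 0 h)
    (hcrit : θ ^ (N - 1) = D * (h ^ N - θ ^ N)) :
    phi N D h θ ≤ 2 * ((N - 1) / (N - 2)) * (D * h ^ N) ^ (1 / (N - 1)) := by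
  obtain ⟨hθ, hθh⟩ := hθ
  have hh : 0 < h := hθ.trans hθh
  have hN2 : 0 < N - 2 := by linarith
  have hcoeff : 0 < (N - 1) / (N - 2) := div_pos (by linarith) hN2
  have hle_root : θ ≤ (D * h ^ N) ^ (1 / (N - 1)) := by
    rw [one_div, le_rpow_inv_iff_of_pos hθ.le (by positivity) (by linarith)]
    have : 0 ≤ D * θ ^ N := by positivity
    linarith
  calc phi N D h θ
      = 2 * ((N - 1) / (N - 2)) * θ - N * D / (N - 2) * (h ^ 2 - θ ^ 2) :=
        phi_eq_of_rpow_eq hN.ne' hθ hcrit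
    _ ≤ 2 * ((N - 1) / (N - 2)) * θ := by
        have : 0 ≤ h ^ 2 - θ ^ 2 := by nlinarith
        have : 0 ≤ N * D / (N - 2) := by positivity
        nlinarith
    _ ≤ 2 * ((N - 1) / (N - 2)) * (D * h ^ N) ^ (1 / (N - 1)) := by
        gcongr

end PhiMin

open PhiMin in
/-- Properties of `Φ(θ) = 2θ + D·(θ² − (N/(N−2))·h² + (2/(N−2))·h^N·θ^{2−N})` for `N > 2`:
convexity on `(0,h]`, derivative `Φ'(θ) = 2 + 2Dθ − 2D·h^N·θ^{1−N}` with `Φ' → −∞` at `0⁺`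
and `Φ'(h) = 2`, existence and uniqueness of the critical point
`θ₀ ∈ (0,h)` with `θ₀^{N−1} = D·(h^N − θ₀^N)`, minimality of `Φ` at `θ₀`, and the bound
`Φ(θ₀) ≤ 2·((N−1)/(N−2))·(D·h^N)^{1/(N−1)}`. -/
theorem phi_min_gt_two (N D h : ℝ) (hN : 2 < N) (hD : 0 < D) (hh : 0 < h) :
    let Φ : ℝ → ℝ := fun θ =>
      2 * θ + D * (θ ^ 2 - (N / (N - 2)) * h ^ 2 + (2 / (N - 2)) * h ^ N * θ ^ (2 - N))
    let Φ' : ℝ → ℝ := fun θ => 2 + 2 * D * θ - 2 * D * h ^ N * θ ^ (1 - N)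
    ConvexOn ℝ (Set.Ioc 0 h) Φ ∧
    (∀ θ ∈ Set.Ioc (0 : ℝ) h, HasDerivAt Φ (Φ' θ) θ) ∧
    Tendsto Φ' (nhdsWithin 0 (Set.Ioi 0)) atBot ∧
    Φ' h = 2 ∧
    (∃! θ₀ : ℝ, θ₀ ∈ Set.Ioo 0 h ∧ θ₀ ^ (N - 1) = D * (h ^ N - θ₀ ^ N)) ∧
    (∀ θ₀ : ℝ, θ₀ ∈ Set.Ioo 0 h → θ₀ ^ (N - 1) = D * (h ^ N - θ₀ ^ N) →
      (∀ θ ∈ Set.Ioc (0 : ℝ) h, Φ θ₀ ≤ Φ θ) ∧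
      Φ θ₀ ≤ 2 * ((N - 1) / (N - 2)) * (D * h ^ N) ^ (1 / (N - 1))) :=
  ⟨(convexOn_phi hN hD.le hh.le).subset Ioc_subset_Ioi_self (convex_Ioc 0 h),
    fun _ hθ => hasDerivAt_phi hN.ne' hθ.1,
    tendsto_phiDeriv_nhdsGT_zero (by linarith) hD hh,
    phiDeriv_self hh,
    existsUnique_rpow_eq_mul_sub (by linarith) hD hh,
    fun _ hθ₀ hcrit => ⟨isMinOn_iff.mp (isMinOn_phi_of_rpow_eq hN hD.le hθ₀ hcrit),
      phi_le_of_rpow_eq hN hD.le hθ₀ hcrit⟩⟩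
end

section
/- Let 1 < N < 2, D > 0 and h > 0, and define Φ : (0,h] → ℝ by Φ(θ) = 2θ + D·(θ² − (N/(N−2))·h² + (2/(N−2))·h^N·θ^{2−N}). Then Φ is convex on (0,h], it attains its minimum over (0,h] at the unique θ₀ ∈ (0,h) with θ₀^{N−1} = D·(h^N − θ₀^N), and the minimum value satisfies Φ(θ₀) ≤ (N/(2−N))·D·h². -/
open Real Filter

private lemma aux_convex (N D h : ℝ) (hN1 : 1 < N) (hN2 : N < 2) (hD : 0 < D) (hh : 0 < h) :
    ConvexOn ℝ (Set.Ioc 0 h) (fun θ : ℝ =>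
      2 * θ + D * (θ ^ 2 - (N / (N - 2)) * h ^ 2 + (2 / (N - 2)) * h ^ N * θ ^ (2 - N))) := by
  have hsub : Set.Ioc (0:ℝ) h ⊆ Set.Ici 0 := fun x hx => le_of_lt hx.1
  have hcIoc : Convex ℝ (Set.Ioc (0:ℝ) h) := convex_Ioc 0 h
  have hconc : ConcaveOn ℝ (Set.Ici 0) (fun x : ℝ => x ^ (2 - N)) :=
    (Real.strictConcaveOn_rpow (by linarith) (by linarith)).concaveOn
  set c : ℝ := D * (2 / (N - 2)) * h ^ N with hc
  have hcneg : 0 ≤ -c := by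
    have hhN : 0 < h ^ N := Real.rpow_pos_of_pos hh N
    have hdiv : 2 / (N - 2) < 0 := div_neg_of_pos_of_neg (by norm_num) (by linarith)
    have hq : D * (2 / (N - 2)) ≤ 0 := mul_nonpos_of_nonneg_of_nonpos hD.le hdiv.le
    have := mul_nonpos_of_nonpos_of_nonneg hq hhN.le
    rw [hc]; linarith
  have h1 : ConvexOn ℝ (Set.Ioc 0 h) (fun x : ℝ => c * x ^ (2 - N)) := by
    have h2 := (hconc.neg.subset hsub hcIoc).smul hcneg
    have heq : (fun x : ℝ => (-c) • (-(fun x : ℝ => x ^ (2-N))) x) = fun x : ℝ => c * x ^ (2-N) := by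
      funext x; simp [smul_eq_mul]
    rwa [heq] at h2
  have hid : ConvexOn ℝ (Set.Ioc (0:ℝ) h) (fun x : ℝ => (2:ℝ) • id x) :=
    (convexOn_id hcIoc).smul (by norm_num)
  have hsq : ConvexOn ℝ (Set.Ioc (0:ℝ) h) (fun x : ℝ => D • x ^ 2) :=
    ((Even.convexOn_pow even_two).subset (Set.subset_univ _) hcIoc).smul hD.le
  have hconst : ConvexOn ℝ (Set.Ioc (0:ℝ) h) (fun _ : ℝ => -(D * (N/(N-2)) * h^2)) :=
    convexOn_const _ hcIoc
  have h4 := ((hid.add hsq).add hconst).add h1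
  have heq2 : (fun θ : ℝ =>
      2 * θ + D * (θ ^ 2 - (N / (N - 2)) * h ^ 2 + (2 / (N - 2)) * h ^ N * θ ^ (2 - N)))
      = fun x : ℝ => (((2:ℝ) • id x + D • x ^ 2) + -(D * (N/(N-2)) * h^2)) + c * x ^ (2-N) := by
    funext x; simp only [smul_eq_mul, id_eq, hc]; ring
  rw [heq2]; exact h4

private lemma aux_mono (N D : ℝ) (hN1 : 1 < N) (hN2 : N < 2) (hD : 0 < D) :
    StrictMonoOn (fun x : ℝ => x ^ (N - 1) + D * x ^ N) (Set.Ici 0) := by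
  intro a ha b hb hab
  have h1 : a ^ (N-1) < b ^ (N-1) := Real.rpow_lt_rpow ha hab (by linarith)
  have h2 : a ^ N < b ^ N := Real.rpow_lt_rpow ha hab (by linarith)
  have := mul_lt_mul_of_pos_left h2 hD
  simp only []
  linarith

private lemma aux_exists (N D h : ℝ) (hN1 : 1 < N) (hN2 : N < 2) (hD : 0 < D) (hh : 0 < h) :
    ∃! θ₀ : ℝ, θ₀ ∈ Set.Ioo 0 h ∧ θ₀ ^ (N - 1) = D * (h ^ N - θ₀ ^ N) := by
  set G : ℝ → ℝ := fun x => x ^ (N - 1) + D * x ^ N with hGdef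
  have hmono := aux_mono N D hN1 hN2 hD
  have hcont : ContinuousOn G (Set.Icc 0 h) := by
    apply ContinuousOn.add
    · exact fun x _ => (Real.continuousAt_rpow_const x (N-1) (Or.inr (by linarith))).continuousWithinAt
    · exact ContinuousOn.const_smul
        (fun x _ => (Real.continuousAt_rpow_const x N (Or.inr (by linarith))).continuousWithinAt) D
  have hG0 : G 0 = 0 := by
    simp [hGdef, Real.zero_rpow (show N - 1 ≠ 0 by linarith), Real.zero_rpow (show N ≠ 0 by linarith)]
  have hGh : D * h ^ N < G h := by
    have : 0 < h ^ (N-1) := Real.rpow_pos_of_pos hh _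
    simp only [hGdef]; linarith
  have hpos : 0 < D * h ^ N := mul_pos hD (Real.rpow_pos_of_pos hh N)
  have hivt := intermediate_value_Ioo hh.le hcont
  obtain ⟨θ₀, hθ₀mem, hGθ₀⟩ := hivt (by rw [hG0]; exact ⟨hpos, hGh⟩)
  have hiff : ∀ x : ℝ, (x ^ (N - 1) = D * (h ^ N - x ^ N)) ↔ G x = D * h ^ N := by
    intro x
    simp only [hGdef]
    constructor <;> intro hx <;> nlinarith [hx]
  refine ⟨θ₀, ⟨hθ₀mem, (hiff θ₀).mpr hGθ₀⟩, ?_⟩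
  rintro θ₁ ⟨hθ₁mem, hroot₁⟩
  exact hmono.injOn hθ₁mem.1.le hθ₀mem.1.le (((hiff θ₁).mp hroot₁).trans hGθ₀.symm)

private lemma aux_deriv (N D h : ℝ) (hN2 : N < 2) {x : ℝ} (hx : 0 < x) :
    HasDerivAt (fun θ : ℝ =>
      2 * θ + D * (θ ^ 2 - (N / (N - 2)) * h ^ 2 + (2 / (N - 2)) * h ^ N * θ ^ (2 - N)))
      (2 + 2 * D * x - 2 * D * h ^ N * x ^ (1 - N)) x := by
  have hne : N - 2 ≠ 0 := by intro hc; linarith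
  have h1 : HasDerivAt (fun y : ℝ => y ^ (2 - N)) ((2 - N) * x ^ (2 - N - 1)) x :=
    Real.hasDerivAt_rpow_const (Or.inl hx.ne')
  have h2 : HasDerivAt (fun y : ℝ => (2 / (N - 2)) * h ^ N * y ^ (2 - N))
      ((2 / (N - 2)) * h ^ N * ((2 - N) * x ^ (2 - N - 1))) x := h1.const_mul _
  have h3 : HasDerivAt
      (fun y : ℝ => y ^ 2 - (N / (N - 2)) * h ^ 2 + (2 / (N - 2)) * h ^ N * y ^ (2 - N))
      (((2 : ℕ) : ℝ) * x ^ (2 - 1) + (2 / (N - 2)) * h ^ N * ((2 - N) * x ^ (2 - N - 1))) x :=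
    ((hasDerivAt_pow 2 x).sub_const _).add h2
  have h4 := ((hasDerivAt_id x).const_mul (2:ℝ)).add (h3.const_mul D)
  have heq : 2 + 2 * D * x - 2 * D * h ^ N * x ^ (1 - N)
      = 2 * 1 + D * (((2 : ℕ) : ℝ) * x ^ (2 - 1) + (2 / (N - 2)) * h ^ N * ((2 - N) * x ^ (2 - N - 1))) := by
    rw [show (2:ℝ) - N - 1 = 1 - N by ring]
    push_cast
    field_simp
    ring
  rw [heq]
  exact h4

private lemma aux_part3 (N D h : ℝ) (hN1 : 1 < N) (hN2 : N < 2) (hD : 0 < D) (hh : 0 < h)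
    (θ₀ : ℝ) (hmem : θ₀ ∈ Set.Ioo 0 h) (hroot : θ₀ ^ (N - 1) = D * (h ^ N - θ₀ ^ N)) :
    (∀ θ ∈ Set.Ioc (0:ℝ) h,
       2 * θ₀ + D * (θ₀ ^ 2 - (N / (N - 2)) * h ^ 2 + (2 / (N - 2)) * h ^ N * θ₀ ^ (2 - N)) ≤
       2 * θ + D * (θ ^ 2 - (N / (N - 2)) * h ^ 2 + (2 / (N - 2)) * h ^ N * θ ^ (2 - N))) ∧
    2 * θ₀ + D * (θ₀ ^ 2 - (N / (N - 2)) * h ^ 2 + (2 / (N - 2)) * h ^ N * θ₀ ^ (2 - N)) ≤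
      (N / (2 - N)) * D * h ^ 2 := by
  obtain ⟨hθ₀pos, hθ₀h⟩ := hmem
  have hG₀ : θ₀ ^ (N - 1) + D * θ₀ ^ N = D * h ^ N := by linear_combination hroot
  set Φ : ℝ → ℝ := fun θ =>
    2 * θ + D * (θ ^ 2 - (N / (N - 2)) * h ^ 2 + (2 / (N - 2)) * h ^ N * θ ^ (2 - N)) with hΦ
  have hd : ∀ x : ℝ, 0 < x → HasDerivAt Φ (2 + 2 * D * x - 2 * D * h ^ N * x ^ (1 - N)) x := by
    intro x hx; rw [hΦ]; exact aux_deriv N D h hN2 hx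
  have hanti : StrictAntiOn Φ (Set.Ioc 0 θ₀) := by
    apply strictAntiOn_of_deriv_neg (convex_Ioc _ _)
    · exact fun x hx => (hd x hx.1).continuousAt.continuousWithinAt
    · intro x hx
      rw [interior_Ioc] at hx
      rw [(hd x hx.1).deriv]
      have hGx : x ^ (N - 1) + D * x ^ N < D * h ^ N := by
        have hlt := aux_mono N D hN1 hN2 hD (Set.mem_Ici.mpr hx.1.le)
          (Set.mem_Ici.mpr hθ₀pos.le) hx.2
        simp only at hlt
        linarith
      have hx1N : (0:ℝ) < x ^ (1 - N) := Real.rpow_pos_of_pos hx.1 _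
      have e1 : x ^ (N - 1) * x ^ (1 - N) = 1 := by
        rw [← Real.rpow_add hx.1, show N - 1 + (1 - N) = 0 by ring, Real.rpow_zero]
      have e2 : x ^ N * x ^ (1 - N) = x := by
        rw [← Real.rpow_add hx.1, show N + (1 - N) = 1 by ring, Real.rpow_one]
      nlinarith [mul_lt_mul_of_pos_right hGx hx1N]
  have hmono : StrictMonoOn Φ (Set.Icc θ₀ h) := by
    apply strictMonoOn_of_deriv_pos (convex_Icc _ _)
    · exact fun x hx => (hd x (hθ₀pos.trans_le hx.1)).continuousAt.continuousWithinAt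
    · intro x hx
      rw [interior_Icc] at hx
      have hx0 : 0 < x := hθ₀pos.trans hx.1
      rw [(hd x hx0).deriv]
      have hGx : D * h ^ N < x ^ (N - 1) + D * x ^ N := by
        have hlt := aux_mono N D hN1 hN2 hD (Set.mem_Ici.mpr hθ₀pos.le)
          (Set.mem_Ici.mpr hx0.le) hx.1
        simp only at hlt
        linarith
      have hx1N : (0:ℝ) < x ^ (1 - N) := Real.rpow_pos_of_pos hx0 _
      have e1 : x ^ (N - 1) * x ^ (1 - N) = 1 := by
        rw [← Real.rpow_add hx0, show N - 1 + (1 - N) = 0 by ring, Real.rpow_zero]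
      have e2 : x ^ N * x ^ (1 - N) = x := by
        rw [← Real.rpow_add hx0, show N + (1 - N) = 1 by ring, Real.rpow_one]
      nlinarith [mul_lt_mul_of_pos_right hGx hx1N]
  constructor
  · intro θ hθ
    rcases lt_trichotomy θ θ₀ with hlt | heq | hgt
    · exact (hanti ⟨hθ.1, hlt.le⟩ ⟨hθ₀pos, le_refl _⟩ hlt).le
    · exact le_of_eq (by rw [heq])
    · exact (hmono ⟨le_refl _, hθ₀h.le⟩ ⟨hgt.le, hθ.2⟩ hgt).le
  · -- the bound
    have hne : N - 2 ≠ 0 := by intro hc; linarith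
    have hne2 : (2:ℝ) - N ≠ 0 := by intro hc; linarith
    have e1 : θ₀ ^ (N - 1) * θ₀ ^ (2 - N) = θ₀ := by
      rw [← Real.rpow_add hθ₀pos, show N - 1 + (2 - N) = 1 by ring, Real.rpow_one]
    have e2 : θ₀ ^ N * θ₀ ^ (2 - N) = θ₀ ^ 2 := by
      rw [← Real.rpow_add hθ₀pos, show N + (2 - N) = ((2:ℕ):ℝ) by push_cast; ring,
        Real.rpow_natCast]
    have key : D * (h ^ N * θ₀ ^ (2 - N)) = θ₀ + D * θ₀ ^ 2 := by
      linear_combination (-(θ₀ ^ (2 - N))) * hG₀ + e1 + D * e2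
    have hLHS : 2 * θ₀ + D * (θ₀ ^ 2 - (N / (N - 2)) * h ^ 2 + (2 / (N - 2)) * h ^ N * θ₀ ^ (2 - N))
        = 2 * θ₀ + D * θ₀ ^ 2 - D * (N / (N - 2)) * h ^ 2 + (2 / (N - 2)) * (θ₀ + D * θ₀ ^ 2) := by
      linear_combination (2 / (N - 2)) * key
    show 2 * θ₀ + D * (θ₀ ^ 2 - (N / (N - 2)) * h ^ 2 + (2 / (N - 2)) * h ^ N * θ₀ ^ (2 - N)) ≤ _
    rw [hLHS, ← sub_nonneg]
    have hid2 : (N / (2 - N)) * D * h ^ 2 -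
        (2 * θ₀ + D * θ₀ ^ 2 - D * (N / (N - 2)) * h ^ 2 + (2 / (N - 2)) * (θ₀ + D * θ₀ ^ 2))
        = (2 * (N - 1) * θ₀ + N * (D * θ₀ ^ 2)) / (2 - N) := by
      field_simp
      ring
    rw [hid2]
    apply div_nonneg _ (by linarith)
    nlinarith [mul_pos hD (pow_pos hθ₀pos 2)]


/-- Properties of `Φ(θ) = 2θ + D·(θ² − (N/(N−2))·h² + (2/(N−2))·h^N·θ^{2−N})` for `1 < N < 2`:
convexity on `(0,h]`, minimality at the unique `θ₀ ∈ (0,h)` with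
`θ₀^{N−1} = D·(h^N − θ₀^N)`, and the bound `Φ(θ₀) ≤ (N/(2−N))·D·h²`. -/
theorem phi_min_lt_two (N D h : ℝ) (hN1 : 1 < N) (hN2 : N < 2) (hD : 0 < D) (hh : 0 < h) :
    let Φ : ℝ → ℝ := fun θ =>
      2 * θ + D * (θ ^ 2 - (N / (N - 2)) * h ^ 2 + (2 / (N - 2)) * h ^ N * θ ^ (2 - N))
    ConvexOn ℝ (Set.Ioc 0 h) Φ ∧
    (∃! θ₀ : ℝ, θ₀ ∈ Set.Ioo 0 h ∧ θ₀ ^ (N - 1) = D * (h ^ N - θ₀ ^ N)) ∧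
    (∀ θ₀ : ℝ, θ₀ ∈ Set.Ioo 0 h → θ₀ ^ (N - 1) = D * (h ^ N - θ₀ ^ N) →
      (∀ θ ∈ Set.Ioc (0 : ℝ) h, Φ θ₀ ≤ Φ θ) ∧
      Φ θ₀ ≤ (N / (2 - N)) * D * h ^ 2) := by
  intro Φ
  refine ⟨aux_convex N D h hN1 hN2 hD hh, aux_exists N D h hN1 hN2 hD hh, ?_⟩
  intro θ₀ hmem hroot
  exact aux_part3 N D h hN1 hN2 hD hh θ₀ hmem hroot
end

section
/- Let (X,d) be a proper metric space (every closed bounded subset is compact) and m a nonnegative Radon measure on X. Fix a real N > 1. Let μ = ρ·m be a Borel probability measure on X whose density ρ is bounded and whose support is bounded, and let (ν_n) be a sequence of Borel probability measures on X, all concentrated on one fixed bounded subset of X, such that ν_n → μ weakly in duality with bounded continuous functions and U_N(ν_n) → U_N(μ). Then ν_n converges to μ in duality with bounded Borel functions: for every bounded Borel function h : X → ℝ, ∫ h dν_n → ∫ h·ρ dm. -/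
/-!
Let `a = 1 - 1/N ∈ (0, 1)` and let `ρₙ` be the density of the absolutely continuous part of
`ν n`. Concavity of `t ↦ t ^ a` gives `r ^ a ≤ (1 - a) s ^ a + a s ^ (a - 1) r` for all `s > 0`.
Use `s = T` (large) on a set `E` of small `m`-measure and, off `E`, `s = u` with `u` continuous,
bounded away from `0` and close to `ρ`. Integrating against `m`, and noting that
`∫ a u ^ (a - 1) dν n` dominates both `∫_{Eᶜ} a u ^ (a - 1) ρₙ dm` and a fixed multiple of
`ν n (E)` (singular part included), weak convergence against `u ^ (a - 1)` gives
`∫ ρₙ ^ a dm + c ν n (E) ≤ ∫ ρ ^ a dm + small` for large `n`. As `∫ ρₙ ^ a dm → ∫ ρ ^ a dm`, the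
`ν n` are eventually uniformly absolutely continuous with respect to `m` restricted to a compact
set carrying all the measures. A bounded Borel `h` is uniformly close to a bounded continuous
function outside a set of small `m`-measure, so the weak convergence transfers to `h`.
-/

open Real MeasureTheory Filter

/-- The internal energy `U_N(ν) = −∫ ρ_ν^{1−1/N} dm`, where `ρ_ν` is the density of the
absolutely continuous part of `ν` with respect to `m` (Lebesgue decomposition
`ν = ρ_ν·m + ν^s`, `ν^s ⊥ m`). -/
noncomputable def internalEnergy {X : Type*} [MeasurableSpace X]
    (m ν : Measure X) (N : ℝ) : ℝ :=
  -∫ x, ((ν.rnDeriv m x).toReal) ^ (1 - 1 / N) ∂m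

open Topology BoundedContinuousFunction

section RpowTangent

/-- The value at `r` of the tangent line `s ^ a + a * s ^ (a - 1) * (r - s)` to `t ↦ t ^ a`
at `s > 0`. -/
noncomputable def rpowTangent (a s r : ℝ) : ℝ := (1 - a) * s ^ a + a * s ^ (a - 1) * r

lemma rpow_le_rpowTangent {a s r : ℝ} (ha0 : 0 ≤ a) (ha1 : a ≤ 1) (hs : 0 < s) (hr : 0 ≤ r) :
    r ^ a ≤ rpowTangent a s r := by
  have amgm : r ^ a * s ^ (1 - a) ≤ a * r + (1 - a) * s :=
    geom_mean_le_arith_mean2_weighted ha0 (by linarith) hr hs.le (by ring)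
  have hs1 : s ^ (1 - a) * s ^ (a - 1) = 1 := by
    rw [← rpow_add hs]; norm_num
  have hs2 : s * s ^ (a - 1) = s ^ a := by
    rw [mul_comm, ← rpow_add_one hs.ne']; ring_nf
  calc r ^ a = r ^ a * s ^ (1 - a) * s ^ (a - 1) := by rw [mul_assoc, hs1, mul_one]
    _ ≤ (a * r + (1 - a) * s) * s ^ (a - 1) := by gcongr
    _ = rpowTangent a s r := by rw [rpowTangent, ← hs2]; ring

lemma ENNReal.rpow_le_rpowTangent {a s : ℝ} (ha0 : 0 < a) (ha1 : a ≤ 1) (hs : 0 < s)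
    (r : ENNReal) :
    r ^ a ≤ ENNReal.ofReal ((1 - a) * s ^ a) + ENNReal.ofReal (a * s ^ (a - 1)) * r := by
  have hκ : 0 < a * s ^ (a - 1) := _root_.mul_pos ha0 (rpow_pos_of_pos hs _)
  induction r with
  | top => simp [ENNReal.top_rpow_of_pos ha0, ENNReal.mul_top (ENNReal.ofReal_pos.2 hκ).ne']
  | coe r =>
    rw [← ENNReal.ofReal_coe_nnreal, ENNReal.ofReal_rpow_of_nonneg r.coe_nonneg ha0.le,
      ← ENNReal.ofReal_mul hκ.le, ← ENNReal.ofReal_add (by nlinarith [rpow_nonneg hs.le a])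
        (by positivity)]
    exact ENNReal.ofReal_le_ofReal (_root_.rpow_le_rpowTangent ha0.le ha1 hs r.coe_nonneg)

lemma rpowTangent_self {a r : ℝ} (hr : 0 < r) : rpowTangent a r r = r ^ a := by
  rw [rpowTangent, mul_assoc, ← rpow_add_one hr.ne']; ring_nf

lemma rpowTangent_le_rpow {a s r : ℝ} (ha : 0 ≤ a) (hs : 0 < s) (hr : r ≤ s) :
    rpowTangent a s r ≤ s ^ a := by
  calc rpowTangent a s r ≤ rpowTangent a s s := by unfold rpowTangent; gcongr
    _ = s ^ a := rpowTangent_self hs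

lemma rpowTangent_max_le {a r η : ℝ} (ha : 0 ≤ a) (hr : 0 ≤ r) (hη : 0 < η) :
    rpowTangent a (max r η) r ≤ r ^ a + η ^ a := by
  rcases le_total η r with h | h
  · rw [max_eq_left h, rpowTangent_self (hη.trans_le h)]
    linarith [rpow_nonneg hη.le a]
  · rw [max_eq_right h]
    linarith [rpowTangent_le_rpow ha hη h, rpow_nonneg hr a]

lemma norm_rpowTangent_le {a s r η C : ℝ} (ha0 : 0 ≤ a) (ha1 : a ≤ 1) (hη : 0 < η)
    (hs : s ∈ Set.Icc η C) (hr : r ∈ Set.Icc 0 C) :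
    ‖rpowTangent a s r‖ ≤ C ^ a + η ^ (a - 1) * C := by
  have hs0 : 0 < s := hη.trans_le hs.1
  rw [Real.norm_of_nonneg ((rpow_nonneg hr.1 a).trans (rpow_le_rpowTangent ha0 ha1 hs0 hr.1))]
  have h1 : s ^ a ≤ C ^ a := rpow_le_rpow hs0.le hs.2 ha0
  have h2 : s ^ (a - 1) * r ≤ η ^ (a - 1) * C :=
    mul_le_mul (rpow_le_rpow_of_nonpos hη hs.1 (by linarith)) hr.2 hr.1 (rpow_nonneg hη.le _)
  have h3 : 0 ≤ s ^ (a - 1) * r := mul_nonneg (rpow_nonneg hs0.le _) hr.1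
  unfold rpowTangent
  nlinarith [rpow_nonneg hs0.le a]

lemma continuousAt_rpowTangent {a s : ℝ} (hs : s ≠ 0) (r : ℝ) :
    ContinuousAt (fun t => rpowTangent a t r) s := by
  unfold rpowTangent
  fun_prop (disch := exact Or.inl hs)

lemma norm_mul_rpow_le_of_mem_Icc {s η C : ℝ} (hη : 0 < η) (hs : s ∈ Set.Icc η C) (c b : ℝ) :
    ‖c * s ^ b‖ ≤ |c| * (η ^ b + C ^ b) := by
  have hs0 : 0 < s := hη.trans_le hs.1
  rw [norm_mul, Real.norm_of_nonneg (rpow_nonneg hs0.le b), Real.norm_eq_abs]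
  gcongr
  rcases le_total 0 b with hb | hb
  · linarith [rpow_le_rpow hs0.le hs.2 hb, rpow_nonneg hη.le b]
  · linarith [rpow_le_rpow_of_nonpos hη hs.1 hb, rpow_nonneg (hη.le.trans (hs.1.trans hs.2)) b]

lemma exists_pos_mul_rpow_sub_one_le {a : ℝ} (ha1 : a < 1) {γ : ℝ} (hγ : 0 < γ) :
    ∃ T > 0, a * T ^ (a - 1) ≤ γ := by
  have hlim : Tendsto (fun T : ℝ => a * T ^ (a - 1)) atTop (𝓝 0) := by
    simpa using (tendsto_rpow_neg_atTop (by linarith : 0 < 1 - a)).const_mul a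
  obtain ⟨T, hT, hT_pos⟩ := ((hlim.eventually (eventually_le_nhds hγ)).and
    (eventually_gt_atTop 0)).exists
  exact ⟨T, hT_pos, hT⟩

end RpowTangent

lemma BoundedContinuousFunction.exists_eq_const_mul_rpow {X : Type*} [TopologicalSpace X]
    (u : X →ᵇ ℝ) {η C : ℝ} (hη : 0 < η) (hu_mem : ∀ x, u x ∈ Set.Icc η C) (c b : ℝ) :
    ∃ w : X →ᵇ ℝ, ∀ x, w x = c * u x ^ b :=
  ⟨.ofNormedAddCommGroup _
    ((u.continuous.rpow_const fun x => Or.inl (hη.trans_le (hu_mem x).1).ne').const_mul c) _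
    fun x => norm_mul_rpow_le_of_mem_Icc hη (hu_mem x) c b, fun _ => rfl⟩

section MeasureBounds

variable {X : Type*} [MeasurableSpace X]

lemma integrable_const_mul_rpow_of_mem_Icc {m : Measure X} [IsFiniteMeasure m] {u : X → ℝ}
    (hu : Measurable u) {η C : ℝ} (hη : 0 < η) (hu_mem : ∀ x, u x ∈ Set.Icc η C) (c b : ℝ) :
    Integrable (fun x => c * u x ^ b) m :=
  .of_bound ((hu.pow_const b).const_mul c).aestronglyMeasurable _
    (ae_of_all _ fun x => norm_mul_rpow_le_of_mem_Icc hη (hu_mem x) c b)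

lemma integral_rpowTangent_max_le_add (m : Measure X) [IsFiniteMeasure m] {ρ : X → ℝ}
    (hρ : Measurable ρ) {C : ℝ} (hρ_mem : ∀ x, ρ x ∈ Set.Icc 0 C) {a : ℝ} (ha0 : 0 < a)
    (ha1 : a < 1) {η : ℝ} (hη : 0 < η) (hηC : η ≤ C) :
    ∫ x, rpowTangent a (max (ρ x) η) (ρ x) ∂m ≤ ∫ x, ρ x ^ a ∂m + η ^ a * m.real Set.univ := by
  have hρa_int : Integrable (fun x => ρ x ^ a) m := by
    refine .of_bound (hρ.pow_const a).aestronglyMeasurable (C ^ a) (ae_of_all _ fun x => ?_)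
    rw [Real.norm_of_nonneg (rpow_nonneg (hρ_mem x).1 a)]
    exact rpow_le_rpow (hρ_mem x).1 (hρ_mem x).2 ha0.le
  calc ∫ x, rpowTangent a (max (ρ x) η) (ρ x) ∂m ≤ ∫ x, (ρ x ^ a + η ^ a) ∂m := by
        refine integral_mono (.of_bound (by unfold rpowTangent; fun_prop) _ (ae_of_all _ fun x =>
          norm_rpowTangent_le ha0.le ha1.le hη ⟨le_max_right _ _, max_le (hρ_mem x).2 hηC⟩
            (hρ_mem x))) (hρa_int.add (integrable_const _)) fun x => ?_
        exact rpowTangent_max_le ha0.le (hρ_mem x).1 hη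
    _ = ∫ x, ρ x ^ a ∂m + η ^ a * m.real Set.univ := by
        rw [integral_add hρa_int (integrable_const _), integral_const, smul_eq_mul, mul_comm]

lemma lintegral_rpow_add_mul_le {m ν : Measure X} {r : X → ENNReal} (hr : Measurable r)
    (hrν : m.withDensity r ≤ ν) {a : ℝ} (ha0 : 0 < a) (ha1 : a ≤ 1) {u : X → ℝ}
    (hu : Measurable u) (hu_pos : ∀ x, 0 < u x) {c : ℝ} (hc : ∀ x, c ≤ a * u x ^ (a - 1))
    {T : ℝ} (hT : 0 < T) {E : Set X} (hE : MeasurableSet E) :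
    ∫⁻ x, r x ^ a ∂m + ENNReal.ofReal c * ν E ≤
      ENNReal.ofReal ((1 - a) * T ^ a) * m E + ENNReal.ofReal (a * T ^ (a - 1)) * ν Set.univ +
        ∫⁻ x, ENNReal.ofReal ((1 - a) * u x ^ a) ∂m +
          ∫⁻ x, ENNReal.ofReal (a * u x ^ (a - 1)) ∂ν := by
  set θ : X → ENNReal := fun x => ENNReal.ofReal ((1 - a) * u x ^ a)
  set κ : X → ENNReal := fun x => ENNReal.ofReal (a * u x ^ (a - 1))
  have hκ : Measurable κ := by fun_prop
  have on_E : ∫⁻ x in E, r x ^ a ∂m ≤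
      ENNReal.ofReal ((1 - a) * T ^ a) * m E + ENNReal.ofReal (a * T ^ (a - 1)) * ν Set.univ :=
    calc ∫⁻ x in E, r x ^ a ∂m
        ≤ ∫⁻ x in E, (ENNReal.ofReal ((1 - a) * T ^ a) +
            ENNReal.ofReal (a * T ^ (a - 1)) * r x) ∂m :=
          lintegral_mono fun x => ENNReal.rpow_le_rpowTangent ha0 ha1 hT (r x)
      _ = ENNReal.ofReal ((1 - a) * T ^ a) * m E +
            ENNReal.ofReal (a * T ^ (a - 1)) * m.withDensity r E := by
          rw [lintegral_add_left measurable_const, setLIntegral_const, lintegral_const_mul _ hr,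
            withDensity_apply _ hE]
      _ ≤ _ := add_le_add_right (mul_le_mul_right
            ((hrν E).trans (measure_mono (Set.subset_univ E))) _) _
  have on_Ec : ∫⁻ x in Eᶜ, r x ^ a ∂m ≤ ∫⁻ x, θ x ∂m + ∫⁻ x in Eᶜ, κ x ∂ν :=
    calc ∫⁻ x in Eᶜ, r x ^ a ∂m ≤ ∫⁻ x in Eᶜ, (θ x + r x * κ x) ∂m :=
          lintegral_mono fun x => by
            rw [mul_comm (r x)]; exact ENNReal.rpow_le_rpowTangent ha0 ha1 (hu_pos x) (r x)
      _ = ∫⁻ x in Eᶜ, θ x ∂m + ∫⁻ x in Eᶜ, κ x ∂(m.withDensity r) := by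
          rw [lintegral_add_left (by fun_prop), restrict_withDensity hE.compl,
            lintegral_withDensity_eq_lintegral_mul _ hr hκ]
          rfl
      _ ≤ _ := by
          gcongr
          exact Measure.restrict_le_self
  have on_E_ν : ENNReal.ofReal c * ν E ≤ ∫⁻ x in E, κ x ∂ν := by
    rw [← setLIntegral_const]
    exact setLIntegral_mono hκ fun x _ => ENNReal.ofReal_le_ofReal (hc x)
  calc ∫⁻ x, r x ^ a ∂m + ENNReal.ofReal c * ν E
      = ∫⁻ x in E, r x ^ a ∂m + ∫⁻ x in Eᶜ, r x ^ a ∂m + ENNReal.ofReal c * ν E := by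
        rw [lintegral_add_compl _ hE]
    _ ≤ _ := add_le_add (add_le_add on_E on_Ec) on_E_ν
    _ = _ := by
        conv_rhs => rw [← lintegral_add_compl κ hE (μ := ν)]
        ring

lemma ofReal_integral_toReal_rpow_le_lintegral {m : Measure X} {r : X → ENNReal}
    (hr : Measurable r) {a : ℝ} (ha : 0 ≤ a) :
    ENNReal.ofReal (∫ x, (r x).toReal ^ a ∂m) ≤ ∫⁻ x, r x ^ a ∂m := by
  rw [integral_eq_lintegral_of_nonneg_ae (ae_of_all _ fun x => by positivity)
    (hr.ennreal_toReal.pow_const a).aestronglyMeasurable]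
  refine ENNReal.ofReal_toReal_le.trans (lintegral_mono fun x => ?_)
  rw [← ENNReal.ofReal_rpow_of_nonneg ENNReal.toReal_nonneg ha]
  exact ENNReal.rpow_le_rpow ENNReal.ofReal_toReal_le ha

lemma integral_rpow_add_mul_measureReal_le {m ν : Measure X} [IsFiniteMeasure m]
    [IsProbabilityMeasure ν] {r : X → ENNReal} (hr : Measurable r) (hrν : m.withDensity r ≤ ν)
    {a : ℝ} (ha0 : 0 < a) (ha1 : a ≤ 1) {u : X → ℝ} (hu : Measurable u) {η C : ℝ} (hη : 0 < η)
    (hu_mem : ∀ x, u x ∈ Set.Icc η C) {T : ℝ} (hT : 0 < T) {E : Set X} (hE : MeasurableSet E) :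
    ∫ x, (r x).toReal ^ a ∂m + a * C ^ (a - 1) * ν.real E ≤
      (1 - a) * T ^ a * m.real E + a * T ^ (a - 1) + ∫ x, (1 - a) * u x ^ a ∂m +
        ∫ x, a * u x ^ (a - 1) ∂ν := by
  have hu_pos : ∀ x, 0 < u x := fun x => hη.trans_le (hu_mem x).1
  have hc : ∀ x, a * C ^ (a - 1) ≤ a * u x ^ (a - 1) := fun x =>
    mul_le_mul_of_nonneg_left
      (rpow_le_rpow_of_nonpos (hu_pos x) (hu_mem x).2 (by linarith)) ha0.le
  have hTa : 0 ≤ (1 - a) * T ^ a := mul_nonneg (by linarith) (by positivity)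
  have hA : 0 ≤ (1 - a) * T ^ a * m.real E := mul_nonneg hTa measureReal_nonneg
  have hB : 0 ≤ a * T ^ (a - 1) := by positivity
  have hθ : 0 ≤ ∫ x, (1 - a) * u x ^ a ∂m :=
    integral_nonneg fun x => mul_nonneg (by linarith) (rpow_nonneg (hu_pos x).le a)
  have hκ : 0 ≤ ∫ x, a * u x ^ (a - 1) ∂ν :=
    integral_nonneg fun x => mul_nonneg ha0.le (rpow_nonneg (hu_pos x).le _)
  have hlhs : ENNReal.ofReal (∫ x, (r x).toReal ^ a ∂m + a * C ^ (a - 1) * ν.real E) ≤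
      ∫⁻ x, r x ^ a ∂m + ENNReal.ofReal (a * C ^ (a - 1)) * ν E := by
    rw [← ofReal_measureReal (μ := ν), ← ENNReal.ofReal_mul' measureReal_nonneg]
    exact ENNReal.ofReal_add_le.trans
      (add_le_add_left (ofReal_integral_toReal_rpow_le_lintegral hr ha0.le) _)
  have hrhs : ENNReal.ofReal ((1 - a) * T ^ a) * m E +
        ENNReal.ofReal (a * T ^ (a - 1)) * ν Set.univ +
        ∫⁻ x, ENNReal.ofReal ((1 - a) * u x ^ a) ∂m +
          ∫⁻ x, ENNReal.ofReal (a * u x ^ (a - 1)) ∂ν =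
      ENNReal.ofReal ((1 - a) * T ^ a * m.real E + a * T ^ (a - 1) + ∫ x, (1 - a) * u x ^ a ∂m +
        ∫ x, a * u x ^ (a - 1) ∂ν) := by
    rw [ENNReal.ofReal_add (by positivity) hκ, ENNReal.ofReal_add (by positivity) hθ,
      ENNReal.ofReal_add hA hB, ENNReal.ofReal_mul hTa,
      ofReal_integral_eq_lintegral_ofReal (integrable_const_mul_rpow_of_mem_Icc hu hη hu_mem _ _)
        (ae_of_all _ fun x => mul_nonneg (by linarith) (rpow_nonneg (hu_pos x).le a)),
      ofReal_integral_eq_lintegral_ofReal (integrable_const_mul_rpow_of_mem_Icc hu hη hu_mem _ _)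
        (ae_of_all _ fun x => mul_nonneg ha0.le (rpow_nonneg (hu_pos x).le _)),
      ofReal_measureReal, measure_univ, mul_one]
  exact (ENNReal.ofReal_le_ofReal_iff (by positivity)).1 ((hlhs.trans
    (lintegral_rpow_add_mul_le hr hrν ha0 ha1 hu hu_pos hc hT hE)).trans_eq hrhs)

def EventuallyUniformlyAbsolutelyContinuous (ν : ℕ → Measure X) (m : Measure X) : Prop :=
  ∀ ε > 0, ∃ δ > 0, ∀ᶠ n in atTop, ∀ E, MeasurableSet E → m.real E ≤ δ → (ν n).real E ≤ ε

lemma abs_integral_sub_integral_le (P : Measure X) [IsProbabilityMeasure P] {f g : X → ℝ}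
    (hf : Measurable f) (hg : Measurable g) {C t : ℝ} (hfC : ∀ x, |f x| ≤ C)
    (hgC : ∀ x, |g x| ≤ C) (ht : 0 ≤ t) {A : Set X} (hA : MeasurableSet A)
    (hfg : ∀ x ∉ A, |f x - g x| ≤ t) :
    |∫ x, f x ∂P - ∫ x, g x ∂P| ≤ t + 2 * C * P.real A := by
  have hf_int : Integrable f P := .of_bound hf.aestronglyMeasurable C (ae_of_all _ hfC)
  have hg_int : Integrable g P := .of_bound hg.aestronglyMeasurable C (ae_of_all _ hgC)
  have hbound : ∀ x, |f x - g x| ≤ t + A.indicator (fun _ => 2 * C) x := fun x => by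
    by_cases hx : x ∈ A
    · rw [Set.indicator_of_mem hx]
      linarith [abs_sub (f x) (g x), hfC x, hgC x]
    · rw [Set.indicator_of_notMem hx, add_zero]
      exact hfg x hx
  rw [← integral_sub hf_int hg_int]
  calc |∫ x, f x - g x ∂P| ≤ ∫ x, |f x - g x| ∂P := abs_integral_le_integral_abs
    _ ≤ ∫ x, (t + A.indicator (fun _ => 2 * C) x) ∂P :=
        integral_mono (hf_int.sub hg_int).abs
          ((integrable_const t).add ((integrable_const _).indicator hA)) hbound
    _ = t + 2 * C * P.real A := by
        rw [integral_add (integrable_const t) ((integrable_const _).indicator hA),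
          integral_const, integral_indicator_const _ hA]
        simp [mul_comm]

lemma integral_withDensity_ofReal (m : Measure X) {ρ : X → ℝ} (hρ : Measurable ρ)
    (hρ_nonneg : ∀ x, 0 ≤ ρ x) (f : X → ℝ) :
    ∫ x, f x ∂m.withDensity (fun x => ENNReal.ofReal (ρ x)) = ∫ x, f x * ρ x ∂m := by
  rw [integral_withDensity_eq_integral_toReal_smul (by fun_prop)
    (ae_of_all _ fun _ => ENNReal.ofReal_lt_top)]
  simp only [ENNReal.toReal_ofReal (hρ_nonneg _), smul_eq_mul, mul_comm]

lemma eventuallyUniformlyAbsolutelyContinuous_withDensity (m : Measure X) [IsFiniteMeasure m]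
    {ρ : X → ℝ} {C : ℝ} (hC : 0 < C) (hρ : ∀ x, ρ x ≤ C) :
    EventuallyUniformlyAbsolutelyContinuous
      (fun _ => m.withDensity fun x => ENNReal.ofReal (ρ x)) m := by
  intro ε hε
  refine ⟨ε / C, by positivity, Eventually.of_forall fun _ E hE hmE => ?_⟩
  refine ENNReal.toReal_le_of_le_ofReal hε.le ?_
  calc m.withDensity (fun x => ENNReal.ofReal (ρ x)) E
      ≤ ∫⁻ _ in E, ENNReal.ofReal C ∂m := by
        rw [withDensity_apply _ hE]
        exact lintegral_mono fun x => ENNReal.ofReal_le_ofReal (hρ x)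
    _ = ENNReal.ofReal (C * m.real E) := by
        rw [setLIntegral_const, ENNReal.ofReal_mul hC.le, ofReal_measureReal]
    _ ≤ ENNReal.ofReal ε := ENNReal.ofReal_le_ofReal ((le_div_iff₀' hC).1 hmE)

lemma setIntegral_toReal_rnDeriv_rpow_eq_integral {m ν : Measure X} [SigmaFinite m]
    [ν.HaveLebesgueDecomposition m] {K : Set X} (hK : MeasurableSet K) (hνK : ν Kᶜ = 0)
    {a : ℝ} (ha : a ≠ 0) :
    ∫ x in K, (ν.rnDeriv m x).toReal ^ a ∂m = ∫ x, (ν.rnDeriv m x).toReal ^ a ∂m := by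
  refine setIntegral_eq_integral_of_ae_compl_eq_zero ?_
  have hrestrict := Measure.rnDeriv_restrict ν m hK
  rw [Measure.restrict_eq_self_of_ae_mem (measure_eq_zero_iff_ae_notMem.1 hνK |>.mono
    fun x hx => not_not.1 hx)] at hrestrict
  filter_upwards [hrestrict] with x hx hxK
  rw [hx, Set.indicator_of_notMem hxK, ENNReal.toReal_zero, zero_rpow ha]

lemma integral_toReal_rnDeriv_withDensity_rpow (m : Measure X) [SigmaFinite m] {ρ : X → ℝ}
    (hρ : Measurable ρ) (hρ_nonneg : ∀ x, 0 ≤ ρ x) (a : ℝ) :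
    ∫ x, ((m.withDensity fun x => ENNReal.ofReal (ρ x)).rnDeriv m x).toReal ^ a ∂m =
      ∫ x, ρ x ^ a ∂m := by
  refine integral_congr_ae ?_
  filter_upwards [Measure.rnDeriv_withDensity m (by fun_prop :
    Measurable fun x => ENNReal.ofReal (ρ x))] with x hx
  rw [hx, ENNReal.toReal_ofReal (hρ_nonneg x)]

end MeasureBounds

section ContinuousApproximation

variable {X : Type*} [TopologicalSpace X] [NormalSpace X] [MeasurableSpace X] [BorelSpace X]
  (m : Measure X) [IsFiniteMeasure m] [m.WeaklyRegular]

lemma exists_seq_boundedContinuous_tendsto_ae {v : X → ℝ} (hv : AEStronglyMeasurable v m)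
    {lo hi : ℝ} (hv_mem : ∀ x, v x ∈ Set.Icc lo hi) :
    ∃ u : ℕ → X →ᵇ ℝ, (∀ k x, u k x ∈ Set.Icc lo hi) ∧
      ∀ᵐ x ∂m, Tendsto (fun k => u k x) atTop (𝓝 (v x)) := by
  have hLp : MemLp v 1 m := .of_bound hv _ (ae_of_all _ fun x =>
    abs_le_max_abs_abs (hv_mem x).1 (hv_mem x).2)
  choose g hg using fun k : ℕ =>
    hLp.exists_boundedContinuous_eLpNorm_sub_le ENNReal.one_ne_top
      (ENNReal.inv_ne_zero.2 (ENNReal.natCast_ne_top k))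
  have hmeas : TendstoInMeasure m (fun k => ⇑(g k)) atTop v := by
    refine tendstoInMeasure_of_tendsto_eLpNorm one_ne_zero
      (fun k => (g k).continuous.aestronglyMeasurable) hv ?_
    refine tendsto_of_tendsto_of_tendsto_of_le_of_le tendsto_const_nhds
      ENNReal.tendsto_inv_nat_nhds_zero (fun _ => zero_le) fun k => ?_
    rw [eLpNorm_sub_comm]
    exact (hg k).1
  obtain ⟨ns, -, hns⟩ := hmeas.exists_seq_tendsto_ae
  refine ⟨fun k => (g (ns k) ⊓ .const X hi) ⊔ .const X lo, fun k x => ?_, ?_⟩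
  · simp only [BoundedContinuousFunction.coe_sup, BoundedContinuousFunction.coe_inf,
      Pi.sup_apply, Pi.inf_apply, BoundedContinuousFunction.const_apply]
    exact ⟨le_sup_right, sup_le inf_le_right ((hv_mem x).1.trans (hv_mem x).2)⟩
  · filter_upwards [hns] with x hx
    have hclamp := (hx.min (tendsto_const_nhds (x := hi))).max (tendsto_const_nhds (x := lo))
    simpa [(hv_mem x).1, (hv_mem x).2] using hclamp

lemma exists_boundedContinuous_abs_sub_le_off {h : X → ℝ} (hh : Measurable h) {C : ℝ}
    (hC : ∀ x, |h x| ≤ C) {t δ : ℝ} (ht : 0 < t) (hδ : 0 < δ) :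
    ∃ g : X →ᵇ ℝ, (∀ x, |g x| ≤ C) ∧
      ∃ A, MeasurableSet A ∧ m.real A ≤ δ ∧ ∀ x ∉ A, |h x - g x| ≤ t := by
  obtain ⟨g, hg_mem, hg_lim⟩ := exists_seq_boundedContinuous_tendsto_ae m hh.aestronglyMeasurable
    fun x => abs_le.1 (hC x)
  have hmeas := tendstoInMeasure_of_tendsto_ae (fun k => (g k).continuous.aestronglyMeasurable)
    hg_lim (ENNReal.ofReal t) (by positivity)
  obtain ⟨k, hk⟩ := (hmeas.eventually (ge_mem_nhds (ENNReal.ofReal_pos.2 hδ))).exists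
  refine ⟨g k, fun x => abs_le.2 (hg_mem k x), _, measurableSet_le measurable_const
    ((g k).continuous.measurable.edist hh), ENNReal.toReal_le_of_le_ofReal hδ.le hk,
    fun x hx => ?_⟩
  rw [← Real.dist_eq, dist_comm]
  exact (edist_lt_ofReal.1 (not_le.1 hx)).le

lemma exists_boundedContinuous_integral_rpowTangent_le_add {ρ : X → ℝ} (hρ : Measurable ρ)
    {C : ℝ} (hρ_mem : ∀ x, ρ x ∈ Set.Icc 0 C) {a : ℝ} (ha0 : 0 < a) (ha1 : a < 1)
    {v : X → ℝ} (hv : Measurable v) {η : ℝ} (hη : 0 < η) (hv_mem : ∀ x, v x ∈ Set.Icc η C)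
    {γ : ℝ} (hγ : 0 < γ) :
    ∃ u : X →ᵇ ℝ, (∀ x, u x ∈ Set.Icc η C) ∧
      ∫ x, rpowTangent a (u x) (ρ x) ∂m ≤ ∫ x, rpowTangent a (v x) (ρ x) ∂m + γ := by
  obtain ⟨u, hu_mem, hu_lim⟩ := exists_seq_boundedContinuous_tendsto_ae m hv.aestronglyMeasurable
    hv_mem
  have hlim : Tendsto (fun k => ∫ x, rpowTangent a (u k x) (ρ x) ∂m) atTop
      (𝓝 (∫ x, rpowTangent a (v x) (ρ x) ∂m)) := by
    refine tendsto_integral_of_dominated_convergence _ (fun k => ?_) (integrable_const _)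
      (fun k => ae_of_all _ fun x => norm_rpowTangent_le ha0.le ha1.le hη (hu_mem k x)
        (hρ_mem x)) ?_
    · have := (u k).continuous.measurable
      unfold rpowTangent
      fun_prop
    · filter_upwards [hu_lim] with x hx
      exact ((continuousAt_rpowTangent (hη.trans_le (hv_mem x).1).ne' _).tendsto).comp hx
  obtain ⟨k, hk⟩ := (hlim.eventually (eventually_le_nhds (lt_add_of_pos_right _ hγ))).exists
  exact ⟨u k, hu_mem k, hk⟩

lemma exists_boundedContinuous_integral_rpowTangent_le {ρ : X → ℝ} (hρ : Measurable ρ) {C : ℝ}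
    (hC : 0 < C) (hρ_mem : ∀ x, ρ x ∈ Set.Icc 0 C) {a : ℝ} (ha0 : 0 < a) (ha1 : a < 1) {γ : ℝ}
    (hγ : 0 < γ) :
    ∃ η > 0, ∃ u : X →ᵇ ℝ, (∀ x, u x ∈ Set.Icc η C) ∧
      ∫ x, rpowTangent a (u x) (ρ x) ∂m ≤ ∫ x, ρ x ^ a ∂m + γ := by
  obtain ⟨η, hη_small, hη, hηC⟩ : ∃ η, η ^ a * m.real Set.univ < γ / 2 ∧ 0 < η ∧ η < C := by
    have hlim : Tendsto (fun η : ℝ => η ^ a * m.real Set.univ) (𝓝[>] 0) (𝓝 0) := by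
      simpa [zero_rpow ha0.ne'] using
        ((continuousAt_rpow_const 0 a (Or.inr ha0.le)).tendsto.mono_left
          nhdsWithin_le_nhds).mul_const (m.real Set.univ)
    exact ((hlim.eventually (gt_mem_nhds (by positivity))).and (Ioo_mem_nhdsGT hC)).exists
  obtain ⟨u, hu_mem, hu⟩ := exists_boundedContinuous_integral_rpowTangent_le_add m hρ hρ_mem ha0
    ha1 (hρ.max measurable_const) hη (fun x => ⟨le_max_right _ _, max_le (hρ_mem x).2 hηC.le⟩)
    (half_pos hγ)
  have hmax := integral_rpowTangent_max_le_add m hρ hρ_mem ha0 ha1 hη hηC.le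
  exact ⟨η, hη, u, hu_mem, by linarith⟩

theorem eventuallyUniformlyAbsolutelyContinuous_of_tendsto_integral_rpow {ρ : X → ℝ}
    (hρ : Measurable ρ) {C : ℝ} (hC : 0 < C) (hρ_mem : ∀ x, ρ x ∈ Set.Icc 0 C) {a : ℝ}
    (ha0 : 0 < a) (ha1 : a < 1) (ν : ℕ → Measure X) [∀ n, IsProbabilityMeasure (ν n)]
    (r : ℕ → X → ENNReal) (hr : ∀ n, Measurable (r n)) (hrν : ∀ n, m.withDensity (r n) ≤ ν n)
    (hweak : ∀ f : X →ᵇ ℝ, Tendsto (fun n => ∫ x, f x ∂ν n) atTop (𝓝 (∫ x, f x * ρ x ∂m)))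
    (henergy : Tendsto (fun n => ∫ x, (r n x).toReal ^ a ∂m) atTop (𝓝 (∫ x, ρ x ^ a ∂m))) :
    EventuallyUniformlyAbsolutelyContinuous ν m := by
  intro ε hε
  set γ := a * C ^ (a - 1) * ε with hγ
  obtain ⟨η, hη, u, hu_mem, hu⟩ := exists_boundedContinuous_integral_rpowTangent_le m hρ hC
    hρ_mem ha0 ha1 (by positivity : 0 < γ / 4)
  obtain ⟨w, hw⟩ := u.exists_eq_const_mul_rpow hη hu_mem a (a - 1)
  obtain ⟨T, hT, hT_small⟩ := exists_pos_mul_rpow_sub_one_le ha1 (by positivity : 0 < γ / 4)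
  have hTa : 0 ≤ (1 - a) * T ^ a := mul_nonneg (by linarith) (by positivity)
  have hsplit : ∫ x, rpowTangent a (u x) (ρ x) ∂m =
      ∫ x, (1 - a) * u x ^ a ∂m + ∫ x, w x * ρ x ∂m := by
    have hρ_int : Integrable ρ m := .of_bound hρ.aestronglyMeasurable C (ae_of_all _ fun x => by
      rw [Real.norm_of_nonneg (hρ_mem x).1]; exact (hρ_mem x).2)
    rw [← integral_add (integrable_const_mul_rpow_of_mem_Icc u.continuous.measurable hη hu_mem
      _ _) (hρ_int.bdd_mul w.continuous.aestronglyMeasurable (ae_of_all _ w.norm_coe_le_norm))]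
    simp only [rpowTangent, hw]
  refine ⟨γ / 4 / ((1 - a) * T ^ a + 1), by positivity, ?_⟩
  have hγ8 : 0 < γ / 8 := by positivity
  filter_upwards [henergy.eventually (eventually_ge_nhds (sub_lt_self _ hγ8)),
    (hweak w).eventually (eventually_le_nhds (lt_add_of_pos_right _ hγ8))]
    with n hn_energy hn_weak E hE hmE
  have key := integral_rpow_add_mul_measureReal_le (hr n) (hrν n) ha0 ha1.le
    u.continuous.measurable hη hu_mem hT hE
  have hmE' : (1 - a) * T ^ a * m.real E ≤ γ / 4 :=
    calc (1 - a) * T ^ a * m.real E ≤ (1 - a) * T ^ a * (γ / 4 / ((1 - a) * T ^ a + 1)) := by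
          gcongr
      _ ≤ γ / 4 := by
          rw [mul_div_assoc', div_le_iff₀ (by positivity)]
          nlinarith [(by positivity : 0 < γ)]
  simp only [hw] at hn_weak hsplit
  have : a * C ^ (a - 1) * (ν n).real E ≤ a * C ^ (a - 1) * ε := by linarith
  exact le_of_mul_le_mul_left this (by positivity)

theorem tendsto_integral_of_eventuallyUniformlyAbsolutelyContinuous (ν : ℕ → Measure X)
    [∀ n, IsProbabilityMeasure (ν n)] (P : Measure X) [IsProbabilityMeasure P]
    (hν : EventuallyUniformlyAbsolutelyContinuous ν m)
    (hP : EventuallyUniformlyAbsolutelyContinuous (fun _ => P) m)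
    (hweak : ∀ f : X →ᵇ ℝ, Tendsto (fun n => ∫ x, f x ∂ν n) atTop (𝓝 (∫ x, f x ∂P)))
    {h : X → ℝ} (hh : Measurable h) {C : ℝ} (hC : ∀ x, |h x| ≤ C) :
    Tendsto (fun n => ∫ x, h x ∂ν n) atTop (𝓝 (∫ x, h x ∂P)) := by
  have hC0 : 0 ≤ C := (abs_nonneg _).trans (hC (nonempty_of_isProbabilityMeasure P).some)
  rw [Metric.tendsto_nhds]
  intro ε hε
  set ε' := ε / (8 * (C + 1))
  have hCε' : 2 * C * ε' ≤ ε / 4 := by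
    rw [mul_div_assoc', div_le_div_iff₀ (by positivity) (by norm_num)]
    nlinarith
  obtain ⟨δν, hδν, hνev⟩ := hν ε' (by positivity)
  obtain ⟨δP, hδP, hPev⟩ := hP ε' (by positivity)
  obtain ⟨_, hP_small⟩ := hPev.exists
  obtain ⟨g, hg_C, A, hA, hmA, off_A⟩ := exists_boundedContinuous_abs_sub_le_off m hh hC
    (by positivity : 0 < ε / 8) (lt_min hδν hδP)
  filter_upwards [hνev, (hweak g).eventually (Metric.ball_mem_nhds _ (by positivity : 0 < ε / 4))]
    with n hn hn_weak
  have hν_close := abs_integral_sub_integral_le (ν n) hh g.continuous.measurable hC hg_C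
    (by positivity) hA off_A
  have hP_close := abs_integral_sub_integral_le P hh g.continuous.measurable hC hg_C
    (by positivity) hA off_A
  have hν_A : 2 * C * (ν n).real A ≤ 2 * C * ε' :=
    mul_le_mul_of_nonneg_left (hn A hA (hmA.trans (min_le_left _ _))) (by positivity)
  have hP_A : 2 * C * P.real A ≤ 2 * C * ε' :=
    mul_le_mul_of_nonneg_left (hP_small A hA (hmA.trans (min_le_right _ _))) (by positivity)
  rw [Real.dist_eq] at hn_weak
  rw [Real.dist_eq]
  calc |∫ x, h x ∂ν n - ∫ x, h x ∂P|
      ≤ |∫ x, h x ∂ν n - ∫ x, g x ∂ν n| + |∫ x, g x ∂ν n - ∫ x, g x ∂P| +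
          |∫ x, h x ∂P - ∫ x, g x ∂P| := by
        rw [abs_sub_comm (∫ x, h x ∂P)]
        exact (abs_sub_le _ _ _).trans (add_le_add_left (abs_sub_le _ _ _) _)
    _ < ε := by linarith

theorem tendsto_integral_of_tendsto_integral_rpow {ρ : X → ℝ} (hρ : Measurable ρ) {C : ℝ}
    (hC : 0 < C) (hρ_mem : ∀ x, ρ x ∈ Set.Icc 0 C) (P : Measure X) [IsProbabilityMeasure P]
    (hP : P = m.withDensity fun x => ENNReal.ofReal (ρ x)) {a : ℝ} (ha0 : 0 < a) (ha1 : a < 1)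
    (ν : ℕ → Measure X) [∀ n, IsProbabilityMeasure (ν n)] (r : ℕ → X → ENNReal)
    (hr : ∀ n, Measurable (r n)) (hrν : ∀ n, m.withDensity (r n) ≤ ν n)
    (hweak : ∀ f : X →ᵇ ℝ, Tendsto (fun n => ∫ x, f x ∂ν n) atTop (𝓝 (∫ x, f x ∂P)))
    (henergy : Tendsto (fun n => ∫ x, (r n x).toReal ^ a ∂m) atTop (𝓝 (∫ x, ρ x ^ a ∂m)))
    {h : X → ℝ} (hh : Measurable h) {C' : ℝ} (hC' : ∀ x, |h x| ≤ C') :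
    Tendsto (fun n => ∫ x, h x ∂ν n) atTop (𝓝 (∫ x, h x ∂P)) := by
  have hweak_ρ : ∀ f : X →ᵇ ℝ,
      Tendsto (fun n => ∫ x, f x ∂ν n) atTop (𝓝 (∫ x, f x * ρ x ∂m)) := fun f => by
    simpa only [hP, integral_withDensity_ofReal m hρ fun x => (hρ_mem x).1] using hweak f
  refine tendsto_integral_of_eventuallyUniformlyAbsolutelyContinuous m ν P
    (eventuallyUniformlyAbsolutelyContinuous_of_tendsto_integral_rpow m hρ hC hρ_mem ha0 ha1 ν r
      hr hrν hweak_ρ henergy) ?_ hweak hh hC'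
  rw [hP]
  exact eventuallyUniformlyAbsolutelyContinuous_withDensity m hC fun x => (hρ_mem x).2

end ContinuousApproximation

/-- If `μ = ρ·m` has bounded density and bounded support, and `(ν n)` are probability
measures concentrated on a fixed bounded set, converging to `μ` weakly in duality with
bounded continuous functions and with `U_N(ν n) → U_N(μ)`, then `ν n → μ` in duality with
bounded Borel functions. -/
theorem convergence_in_duality_with_bounded_borel
    {X : Type*} [MetricSpace X] [ProperSpace X] [MeasurableSpace X] [BorelSpace X]
    (m : Measure X) [IsLocallyFiniteMeasure m]
    (N : ℝ) (hN : 1 < N)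
    (ρ : X → ℝ) (hρmeas : Measurable ρ) (hρnonneg : ∀ x, 0 ≤ ρ x)
    (hρbdd : ∃ C : ℝ, ∀ x, ρ x ≤ C)
    (hρsupp : Bornology.IsBounded (tsupport ρ))
    (μ : Measure X) (hμ : μ = m.withDensity (fun x => ENNReal.ofReal (ρ x)))
    [IsProbabilityMeasure μ]
    (ν : ℕ → Measure X) [∀ n, IsProbabilityMeasure (ν n)]
    (B : Set X) (hB : Bornology.IsBounded B) (hνB : ∀ n, ν n Bᶜ = 0)
    (hweak : ∀ f : BoundedContinuousFunction X ℝ,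
      Tendsto (fun n => ∫ x, f x ∂(ν n)) atTop (nhds (∫ x, f x ∂μ)))
    (hUN : Tendsto (fun n => internalEnergy m (ν n) N) atTop
      (nhds (internalEnergy m μ N))) :
    ∀ h : X → ℝ, Measurable h → (∃ C : ℝ, ∀ x, |h x| ≤ C) →
      Tendsto (fun n => ∫ x, h x ∂(ν n)) atTop (nhds (∫ x, h x * ρ x ∂m)) := by
  rintro h hh ⟨C, hC⟩
  obtain ⟨Cρ, hCρ⟩ := hρbdd
  have ha0 : 0 < 1 - 1 / N := by
    rw [sub_pos, div_lt_one (by linarith)]; exact hN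
  set K := closure (B ∪ tsupport ρ)
  have hKm : MeasurableSet K := isClosed_closure.measurableSet
  have : IsFiniteMeasure (m.restrict K) :=
    isFiniteMeasure_restrict.2 (hB.union hρsupp).isCompact_closure.measure_lt_top.ne
  have hνK : ∀ n, ν n Kᶜ = 0 := fun n => measure_mono_null
    (Set.compl_subset_compl.2 (Set.subset_union_left.trans subset_closure)) (hνB n)
  have hρK : ∀ x ∉ K, ρ x = 0 := fun x hx => image_eq_zero_of_notMem_tsupport
    fun hx' => hx (subset_closure (Or.inr hx'))
  have hμK : μ = (m.restrict K).withDensity fun x => ENNReal.ofReal (ρ x) := by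
    rw [hμ, ← withDensity_indicator hKm]
    congr with x
    by_cases hx : x ∈ K <;> simp [hx, hρK]
  have henergy : Tendsto (fun n => ∫ x in K, ((ν n).rnDeriv m x).toReal ^ (1 - 1 / N) ∂m)
      atTop (𝓝 (∫ x in K, ρ x ^ (1 - 1 / N) ∂m)) := by
    rw [setIntegral_eq_integral_of_forall_compl_eq_zero fun x hx => by
        rw [hρK x hx, zero_rpow ha0.ne'],
      ← integral_toReal_rnDeriv_withDensity_rpow m hρmeas hρnonneg, ← hμ]
    simp only [setIntegral_toReal_rnDeriv_rpow_eq_integral hKm (hνK _) ha0.ne']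
    simpa only [internalEnergy, neg_neg] using hUN.neg
  rw [← integral_withDensity_ofReal m hρmeas hρnonneg, ← hμ]
  refine tendsto_integral_of_tendsto_integral_rpow (m.restrict K) hρmeas (C := max Cρ 1)
    (by positivity) (fun x => ⟨hρnonneg x, (hCρ x).trans (le_max_left _ _)⟩) μ hμK ha0
    (sub_lt_self _ (by positivity)) ν _ (fun n => Measure.measurable_rnDeriv _ _) (fun n => ?_)
    hweak henergy hh hC
  rw [← restrict_withDensity hKm]
  exact Measure.restrict_le_self.trans (Measure.withDensity_rnDeriv_le _ _)
end
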